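/- Let σ be a semigroup automorphism of (IS_n, *), and let g ∈ S(A), h₁, h₂ ∈ S(Ā) be such that σ([s ↦ t]) = [(g⋈h₁)(s) ↦ (g⋈h₂)(t)] for all s, t ∈ N. Then for every decomposable a ∈ IS_n with dom(a) = {x₁,...,x_l} and a(xᵢ) = yᵢ, one has dom(σ(a)) = {(g⋈h₁)(x₁),...,(g⋈h₁)(x_l)} and σ(a)((g⋈h₁)(xᵢ)) = (g⋈h₂)(yᵢ) for all 1 ≤ i ≤ l; that is, σ(a) = (g⋈h₁)⁻¹ · a · (g⋈h₂) = τ_(g,h₁,h₂)(a) on all decomposable elements. -/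

import Mathlib

open Equiv

/-- `IS n` : the symmetric inverse semigroup on `{1,…,n}`, modeled as partial
equivalences of `Fin n`.  Composition is left-to-right: `(x.trans y) t = y (x t)`. -/
abbrev IS (n : ℕ) := PEquiv (Fin n) (Fin n)

/-- The domain of a partial injective transformation. -/
def sdom {n : ℕ} (x : IS n) : Set (Fin n) := {a | (x a).isSome}

/-- The image of a partial injective transformation. -/
def sim {n : ℕ} (x : IS n) : Set (Fin n) := {b | (x.symm b).isSome}

/-- The rank of a partial injective transformation: the cardinality of its image. -/
noncomputable def srank {n : ℕ} (x : IS n) : ℕ := Nat.card (sim x)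

/-- The set `A = {1,…,k}` inside `Fin n`, i.e. the first `k` elements. -/
def SetA (n k : ℕ) : Set (Fin n) := {i | (i : ℕ) < k}

/-- The idempotent `e` acting identically on `A`, with `dom e = im e = A`. -/
def sandE (n k : ℕ) : IS n where
  toFun i := if (i : ℕ) < k then some i else none
  invFun i := if (i : ℕ) < k then some i else none
  inv a b := by
    try dsimp only
    split_ifs with h1 h2 <;>
      simp_all [Option.mem_def, eq_comm] <;> rintro rfl <;> omega

/-- The sandwich multiplication `x * y = x e y` (left-to-right composition). -/
def smul (n k : ℕ) (x y : IS n) : IS n := (x.trans (sandE n k)).trans y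

/-- `a` is decomposable in `(IS_n, *)` if `a = b * c` for some `b, c`. -/
def Decomp (n k : ℕ) (a : IS n) : Prop := ∃ b c : IS n, smul n k b c = a

/-- `M₁(a) = {x ∈ dom a : x ∈ A, a x ∈ A}`. -/
def M1 (n k : ℕ) (a : IS n) : Set (Fin n) :=
  {x | x ∈ SetA n k ∧ ∃ y ∈ SetA n k, a x = some y}

/-- `M₂(a) = {x ∈ dom a : x ∈ A, a x ∈ Ā}`. -/
def M2 (n k : ℕ) (a : IS n) : Set (Fin n) :=
  {x | x ∈ SetA n k ∧ ∃ y, y ∉ SetA n k ∧ a x = some y}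

/-- `M₃(a) = {x ∈ dom a : x ∈ Ā, a x ∈ A}`. -/
def M3 (n k : ℕ) (a : IS n) : Set (Fin n) :=
  {x | x ∉ SetA n k ∧ ∃ y ∈ SetA n k, a x = some y}

/-- The relation `∼` : for indecomposable `a, b`, `a ∼ b` iff `Mᵢ(a) = Mᵢ(b)` for
`i = 1,2,3` and `a x = b x` on `M₁(a) ∪ M₂(a) ∪ M₃(a)`; if `a` or `b` is
decomposable, `a ∼ b` iff `a = b`. -/
def SimRel (n k : ℕ) (a b : IS n) : Prop :=
  (¬ Decomp n k a ∧ ¬ Decomp n k b ∧ M1 n k a = M1 n k b ∧ M2 n k a = M2 n k b ∧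
    M3 n k a = M3 n k b ∧ ∀ x ∈ M1 n k a ∪ M2 n k a ∪ M3 n k a, a x = b x)
  ∨ ((Decomp n k a ∨ Decomp n k b) ∧ a = b)

/-- `g⋈h` : the permutation of `Fin n` acting as `g` on `A` and as `h` on `Ā`. -/
def bowtie {n : ℕ} (k : ℕ) (g : Perm {x : Fin n // (x : ℕ) < k})
    (h : Perm {x : Fin n // ¬ (x : ℕ) < k}) : Perm (Fin n) :=
  Equiv.Perm.subtypeCongr g h

/-- `τ_(g,h₁,h₂) : a ↦ (g⋈h₁)⁻¹ · a · (g⋈h₂)` (ordinary, left-to-right, composition). -/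
def tauMap {n : ℕ} (k : ℕ) (g : Perm {x : Fin n // (x : ℕ) < k})
    (h₁ h₂ : Perm {x : Fin n // ¬ (x : ℕ) < k}) (a : IS n) : IS n :=
  ((bowtie k g h₁).symm.toPEquiv.trans a).trans (bowtie k g h₂).toPEquiv

/-!
Write `e` for the sandwich idempotent and `τ` for `tauMap k g h₁ h₂`. For `t ∈ A` the product
`[t ↦ t] * x` is the ordinary product `[t ↦ t] · x`, so evaluating `σ ([t ↦ t] * x)` at
`(g⋈h₁)(t)` shows that `σ x` and `τ x` agree on `(g⋈h₂)(A) = A`, i.e. `e · σ x = e · τ x`.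
Applied to the automorphism `x ↦ σ(x⁻¹)⁻¹` this gives `σ x · e = τ x · e`. As `e` is idempotent
and `τ` is itself a homomorphism of `(IS_n, *)`,
`σ (x * y) = (σ x · e) · (e · σ y) = (τ x · e) · (e · τ y) = τ (x * y)`.
-/

section

variable {n k : ℕ}

lemma sandE_apply (i : Fin n) : sandE n k i = if (i : ℕ) < k then some i else none := rfl

lemma sandE_symm : (sandE n k).symm = sandE n k := rfl

lemma sandE_trans_sandE : (sandE n k).trans (sandE n k) = sandE n k := by
  ext i j
  by_cases hi : (i : ℕ) < k <;> simp [PEquiv.trans_eq_some, sandE_apply, hi]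

lemma smul_symm (x y : IS n) : (smul n k x y).symm = smul n k y.symm x.symm := by
  simp only [smul, PEquiv.symm_trans_rev, sandE_symm, PEquiv.trans_assoc]

lemma smul_eq_trans_sandE_trans (x y : IS n) :
    smul n k x y = (x.trans (sandE n k)).trans ((sandE n k).trans y) := by
  rw [PEquiv.trans_assoc, ← PEquiv.trans_assoc (sandE n k) (sandE n k), sandE_trans_sandE, smul,
    PEquiv.trans_assoc]

lemma single_smul_of_lt {s t : Fin n} (ht : (t : ℕ) < k) (x : IS n) :
    smul n k (PEquiv.single s t) x = (PEquiv.single s t).trans x := by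
  rw [smul, PEquiv.single_trans_of_mem s (show t ∈ sandE n k t by simp [sandE_apply, ht])]

lemma map_bot_of_map_smul (σ : Perm (IS n))
    (hσ : ∀ x y : IS n, σ (smul n k x y) = smul n k (σ x) (σ y)) : σ ⊥ = ⊥ := by
  simpa [smul, PEquiv.bot_trans, PEquiv.trans_bot] using hσ ⊥ (σ.symm ⊥)

section bowtie

variable {g : Perm {x : Fin n // (x : ℕ) < k}} {h h₁ h₂ : Perm {x : Fin n // ¬ (x : ℕ) < k}}

lemma bowtie_apply_of_lt {x : Fin n} (hx : (x : ℕ) < k) : bowtie k g h x = g ⟨x, hx⟩ :=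
  Perm.subtypeCongr.left_apply g h hx

lemma bowtie_lt_iff {x : Fin n} : (bowtie k g h x : ℕ) < k ↔ (x : ℕ) < k := by
  by_cases hx : (x : ℕ) < k
  · simp [bowtie_apply_of_lt hx, (g ⟨x, hx⟩).2, hx]
  · simp [bowtie, Perm.subtypeCongr.right_apply g h hx, (h ⟨x, hx⟩).2, hx]

lemma bowtie_eq_of_lt {x : Fin n} (hx : (x : ℕ) < k) : bowtie k g h₁ x = bowtie k g h₂ x := by
  rw [bowtie_apply_of_lt hx, bowtie_apply_of_lt hx]

lemma tauMap_apply_bowtie (a : IS n) (x : Fin n) :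
    tauMap k g h₁ h₂ a (bowtie k g h₁ x) = (a x).map (bowtie k g h₂) := by
  change (((bowtie k g h₁).symm.toPEquiv _).bind a).bind _ = _
  rw [Equiv.toPEquiv_apply, Equiv.symm_apply_apply, Option.bind_some]
  cases a x <;> rfl

lemma sdom_tauMap (a : IS n) : sdom (tauMap k g h₁ h₂ a) = bowtie k g h₁ '' sdom a := by
  ext u
  obtain ⟨x, rfl⟩ := (bowtie k g h₁).surjective u
  simp [sdom, tauMap_apply_bowtie]

lemma tauMap_symm (a : IS n) : (tauMap k g h₁ h₂ a).symm = tauMap k g h₂ h₁ a.symm := by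
  simp only [tauMap, PEquiv.symm_trans_rev, ← Equiv.toPEquiv_symm, Equiv.symm_symm,
    PEquiv.trans_assoc]

lemma bowtie_trans_sandE_trans_symm (z : IS n) :
    (bowtie k g h₂).toPEquiv.trans ((sandE n k).trans ((bowtie k g h₁).symm.toPEquiv.trans z)) =
      (sandE n k).trans z := by
  ext u v
  by_cases hu : (u : ℕ) < k
  · simp [PEquiv.trans_eq_some, sandE_apply, bowtie_lt_iff, hu,
      bowtie_eq_of_lt (h₁ := h₂) (h₂ := h₁) hu]
  · simp [PEquiv.trans_eq_some, sandE_apply, bowtie_lt_iff, hu]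

lemma tauMap_smul (x y : IS n) :
    tauMap k g h₁ h₂ (smul n k x y) = smul n k (tauMap k g h₁ h₂ x) (tauMap k g h₁ h₂ y) := by
  simp only [tauMap, smul, PEquiv.trans_assoc, bowtie_trans_sandE_trans_symm]

lemma map_single_trans_apply {σ : IS n → IS n} {β₁ β₂ : Fin n → Fin n} (hbot : σ ⊥ = ⊥)
    (hform : ∀ s t, σ (PEquiv.single s t) = PEquiv.single (β₁ s) (β₂ t)) (s t : Fin n)
    (x : IS n) : σ ((PEquiv.single s t).trans x) (β₁ s) = (x t).map β₂ := by
  cases hxt : x t with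
  | none => rw [PEquiv.single_trans_of_eq_none s hxt, hbot]; rfl
  | some y => rw [PEquiv.single_trans_of_mem s hxt, hform, PEquiv.single_apply]; rfl

lemma map_apply_bowtie_of_lt {σ : IS n → IS n}
    (hσ : ∀ x y : IS n, σ (smul n k x y) = smul n k (σ x) (σ y)) (hbot : σ ⊥ = ⊥)
    (hform : ∀ s t : Fin n, σ (PEquiv.single s t) =
      PEquiv.single (bowtie k g h₁ s) (bowtie k g h₂ t)) (x : IS n) {t : Fin n}
    (ht : (t : ℕ) < k) : σ x (bowtie k g h₂ t) = (x t).map (bowtie k g h₂) := by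
  have key := hσ (PEquiv.single t t) x
  rw [single_smul_of_lt ht, hform, single_smul_of_lt (bowtie_lt_iff.2 ht)] at key
  rw [← map_single_trans_apply hbot hform t t x, key]
  change _ = (PEquiv.single (bowtie k g h₁ t) (bowtie k g h₂ t) (bowtie k g h₁ t)).bind (σ x)
  rw [PEquiv.single_apply, Option.bind_some]

lemma sandE_trans_map {σ : IS n → IS n}
    (hσ : ∀ x y : IS n, σ (smul n k x y) = smul n k (σ x) (σ y)) (hbot : σ ⊥ = ⊥)
    (hform : ∀ s t : Fin n, σ (PEquiv.single s t) =
      PEquiv.single (bowtie k g h₁ s) (bowtie k g h₂ t)) (x : IS n) :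
    (sandE n k).trans (σ x) = (sandE n k).trans (tauMap k g h₁ h₂ x) := by
  ext1 u
  change (sandE n k u).bind _ = (sandE n k u).bind _
  obtain ⟨t, rfl⟩ := (bowtie k g h₂).surjective u
  by_cases ht : (t : ℕ) < k
  · rw [sandE_apply, if_pos (bowtie_lt_iff.2 ht), Option.bind_some, Option.bind_some,
      map_apply_bowtie_of_lt hσ hbot hform x ht, ← bowtie_eq_of_lt ht, tauMap_apply_bowtie]
  · rw [sandE_apply, if_neg (bowtie_lt_iff.not.2 ht)]
    rfl

lemma map_trans_sandE {σ : IS n → IS n}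
    (hσ : ∀ x y : IS n, σ (smul n k x y) = smul n k (σ x) (σ y)) (hbot : σ ⊥ = ⊥)
    (hform : ∀ s t : Fin n, σ (PEquiv.single s t) =
      PEquiv.single (bowtie k g h₁ s) (bowtie k g h₂ t)) (x : IS n) :
    (σ x).trans (sandE n k) = (tauMap k g h₁ h₂ x).trans (sandE n k) := by
  have dual := sandE_trans_map (σ := fun y => (σ y.symm).symm) (g := g) (h₁ := h₂) (h₂ := h₁)
    (fun y z => by simp only [smul_symm, hσ])
    (by simp only [PEquiv.symm_bot, hbot])
    (fun s t => by simp only [PEquiv.symm_single, hform]) x.symm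
  rw [← tauMap_symm, PEquiv.symm_symm, ← sandE_symm, ← PEquiv.symm_trans_rev,
    ← PEquiv.symm_trans_rev] at dual
  exact PEquiv.symm_injective dual

lemma map_smul_eq_tauMap {σ : IS n → IS n}
    (hσ : ∀ x y : IS n, σ (smul n k x y) = smul n k (σ x) (σ y)) (hbot : σ ⊥ = ⊥)
    (hform : ∀ s t : Fin n, σ (PEquiv.single s t) =
      PEquiv.single (bowtie k g h₁ s) (bowtie k g h₂ t)) (x y : IS n) :
    σ (smul n k x y) = tauMap k g h₁ h₂ (smul n k x y) := by
  rw [hσ, smul_eq_trans_sandE_trans, map_trans_sandE hσ hbot hform,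
    sandE_trans_map hσ hbot hform, ← smul_eq_trans_sandE_trans, tauMap_smul]

end bowtie

end

theorem aut_eq_tau_on_decomposable_general (n k : ℕ)
    (σ : Equiv.Perm (IS n))
    (hσ : ∀ x y : IS n, σ (smul n k x y) = smul n k (σ x) (σ y))
    (g : Perm {x : Fin n // (x : ℕ) < k})
    (h₁ h₂ : Perm {x : Fin n // ¬ (x : ℕ) < k})
    (hform : ∀ s t : Fin n, σ (PEquiv.single s t) =
      PEquiv.single (bowtie k g h₁ s) (bowtie k g h₂ t)) :
    ∀ a : IS n, Decomp n k a →
      sdom (σ a) = bowtie k g h₁ '' sdom a ∧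
      (∀ x ∈ sdom a, (σ a) (bowtie k g h₁ x) = (a x).map (bowtie k g h₂)) ∧
      σ a = tauMap k g h₁ h₂ a := by
  rintro a ⟨b, c, rfl⟩
  have hτ := map_smul_eq_tauMap hσ (map_bot_of_map_smul σ hσ) hform b c
  exact ⟨by rw [hτ, sdom_tauMap], fun x _ => by rw [hτ, tauMap_apply_bowtie], hτ⟩

/-- if an automorphism `σ` of `(IS_n, *)` acts on rank-one elements
via `g, h₁, h₂`, then on every decomposable `a` one has
`dom (σ a) = (g⋈h₁)(dom a)`, `σ a ((g⋈h₁) x) = (g⋈h₂)(a x)` on `dom a`, i.e.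
`σ a = τ_(g,h₁,h₂) a`. -/
theorem aut_eq_tau_on_decomposable (n k : ℕ) (hk : 1 ≤ k) (hkn : k ≤ n)
    (σ : Equiv.Perm (IS n))
    (hσ : ∀ x y : IS n, σ (smul n k x y) = smul n k (σ x) (σ y))
    (g : Perm {x : Fin n // (x : ℕ) < k})
    (h₁ h₂ : Perm {x : Fin n // ¬ (x : ℕ) < k})
    (hform : ∀ s t : Fin n, σ (PEquiv.single s t) =
      PEquiv.single (bowtie k g h₁ s) (bowtie k g h₂ t)) :
    ∀ a : IS n, Decomp n k a →
      sdom (σ a) = bowtie k g h₁ '' sdom a ∧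
      (∀ x ∈ sdom a, (σ a) (bowtie k g h₁ x) = (a x).map (bowtie k g h₂)) ∧
      σ a = tauMap k g h₁ h₂ a :=
  aut_eq_tau_on_decomposable_general n k σ hσ g h₁ h₂ hform
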